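/- arXiv:2601.01622 — 5 statements merged into one kernel-verified Lean document; each statement's English description precedes it below -/
import Mathlib

section
/- Conversely, if X is a standard normal random variable, then its weight function ω_X(x) = Cov(1[X ≥ x], X)/Var(X) coincides with its density for all x. Combined with the previous statement, among random variables with differentiable density vanishing at infinity and finite second moments, ω_X = f_X holds if and only if X is Gaussian (up to scaling). -/
/-!
If `ω = f`, then `f` is the tail integral of the integrable function `z ↦ z f(z)`; hence `f` is
continuous, then differentiable with `f' = -x f`. This linear ODE is also solved by the standard
normal density `φ`, so `f` is a constant multiple of `φ`, and the normalisation `∫ f = 1` forces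
the constant to be `1`. Conversely `-φ` is an antiderivative of `z φ(z)` vanishing at `+∞`, so
`∫_x^∞ z φ(z) dz = φ(x)`.
-/

open MeasureTheory Set Real ProbabilityTheory

theorem eq_div_mul_of_hasDerivAt_eq_mul {f g a : ℝ → ℝ}
    (hf : ∀ x, HasDerivAt f (a x * f x) x) (hg : ∀ x, HasDerivAt g (a x * g x) x)
    (hg0 : ∀ x, g x ≠ 0) (x : ℝ) : f x = f 0 / g 0 * g x := by
  have hquot : ∀ x, HasDerivAt (fun x => f x / g x) 0 x := fun x =>
    ((hf x).div (hg x) (hg0 x)).congr_deriv (by ring)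
  have hconst := is_const_of_deriv_eq_zero (fun x => (hquot x).differentiableAt)
    (fun x => (hquot x).deriv) x 0
  rw [← hconst]
  field_simp [hg0 x]

theorem integrable_mul_of_integrable_sq_mul {f : ℝ → ℝ} {μ : Measure ℝ} (hf0 : ∀ x, 0 ≤ f x)
    (hf : Integrable f μ) (hf2 : Integrable (fun x => x ^ 2 * f x) μ) :
    Integrable (fun x => x * f x) μ := by
  refine (hf.add hf2).mono (measurable_id.aestronglyMeasurable.mul hf.aestronglyMeasurable) ?_
  filter_upwards with x
  have hfx := hf0 x
  have habs : |x| ≤ 1 + x ^ 2 := by nlinarith [abs_nonneg x, sq_abs x]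
  rw [norm_mul, Real.norm_eq_abs, Real.norm_of_nonneg hfx, Pi.add_apply,
    Real.norm_of_nonneg (add_nonneg hfx (mul_nonneg (sq_nonneg x) hfx))]
  nlinarith [mul_le_mul_of_nonneg_right habs hfx]

section TailIntegral

variable {g : ℝ → ℝ}

theorem integral_Ici_eq_sub_intervalIntegral (hg : Integrable g) :
    (fun x => ∫ z in Ici x, g z) = fun x => (∫ z in Ici 0, g z) - ∫ z in 0..x, g z := by
  ext x
  rw [← intervalIntegral.integral_Ici_sub_Ici' hg.integrableOn hg.integrableOn]
  ring

theorem continuous_integral_Ici (hg : Integrable g) : Continuous fun x => ∫ z in Ici x, g z := by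
  rw [integral_Ici_eq_sub_intervalIntegral hg]
  exact continuous_const.sub
    (intervalIntegral.continuous_primitive (fun _ _ => hg.intervalIntegrable) 0)

theorem hasDerivAt_integral_Ici (hg : Integrable g) {x : ℝ} (hgx : ContinuousAt g x) :
    HasDerivAt (fun x => ∫ z in Ici x, g z) (-g x) x := by
  rw [integral_Ici_eq_sub_intervalIntegral hg]
  exact (intervalIntegral.integral_hasDerivAt_right hg.intervalIntegrable
    hg.aestronglyMeasurable.stronglyMeasurableAtFilter hgx).const_sub _

end TailIntegral

section StandardGaussian

theorem gaussianPDFReal_zero_one_apply (x : ℝ) :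
    gaussianPDFReal 0 1 x = (√(2 * π))⁻¹ * exp (-x ^ 2 / 2) := by
  simp [gaussianPDFReal]

theorem hasDerivAt_gaussianPDFReal_zero_one (x : ℝ) :
    HasDerivAt (gaussianPDFReal 0 1) (-x * gaussianPDFReal 0 1 x) x := by
  have hexponent : HasDerivAt (fun x : ℝ => -x ^ 2 / 2) (-x) x :=
    ((hasDerivAt_pow 2 x).neg.div_const 2).congr_deriv (by ring)
  rw [funext gaussianPDFReal_zero_one_apply]
  exact (hexponent.exp.const_mul _).congr_deriv (by ring)

theorem integrable_mul_gaussianPDFReal_zero_one :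
    Integrable fun z => z * gaussianPDFReal 0 1 z := by
  convert (integrable_mul_exp_neg_mul_sq (b := 1 / 2) (by norm_num)).const_mul (√(2 * π))⁻¹
    using 2 with z
  rw [gaussianPDFReal_zero_one_apply]
  ring_nf

theorem integral_Ici_mul_gaussianPDFReal_zero_one (x : ℝ) :
    ∫ z in Ici x, z * gaussianPDFReal 0 1 z = gaussianPDFReal 0 1 x := by
  have hderiv : ∀ z, HasDerivAt (fun z => -gaussianPDFReal 0 1 z) (z * gaussianPDFReal 0 1 z) z :=
    fun z => (hasDerivAt_gaussianPDFReal_zero_one z).neg.congr_deriv (by ring)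
  have htend : Filter.Tendsto (fun z => -gaussianPDFReal 0 1 z) Filter.atTop (nhds 0) :=
    tendsto_zero_of_hasDerivAt_of_integrableOn_Ioi (a := 0) (fun z _ => hderiv z)
      integrable_mul_gaussianPDFReal_zero_one.integrableOn
      (integrable_gaussianPDFReal 0 1).neg.integrableOn
  rw [integral_Ici_eq_integral_Ioi, integral_Ioi_of_hasDerivAt_of_tendsto' (fun z _ => hderiv z)
    integrable_mul_gaussianPDFReal_zero_one.integrableOn htend]
  ring

end StandardGaussian

theorem weight_eq_density_iff_gaussian_general (f : ℝ → ℝ)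
    (hf0 : ∀ x, 0 ≤ f x)
    (hint : ∫ x : ℝ, f x = 1)
    (hmom2 : Integrable (fun x => x ^ 2 * f x)) :
    (∀ x : ℝ, ∫ z in Set.Ici x, z * f z = f x) ↔
      (∀ x : ℝ, f x = (Real.sqrt (2 * Real.pi))⁻¹ * Real.exp (-x ^ 2 / 2)) := by
  simp only [← gaussianPDFReal_zero_one_apply]
  refine ⟨fun hweight => ?_, fun hgauss x => ?_⟩
  · have hf_int : Integrable f := .of_integral_ne_zero (by simp [hint])
    have hmom1 := integrable_mul_of_integrable_sq_mul hf0 hf_int hmom2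
    have htail : f = fun x => ∫ z in Ici x, z * f z := funext fun x => (hweight x).symm
    have hfc : Continuous f := htail ▸ continuous_integral_Ici hmom1
    have hode : ∀ x, HasDerivAt f (-x * f x) x := fun x => by
      have hderiv := hasDerivAt_integral_Ici hmom1 (continuous_id.mul hfc).continuousAt (x := x)
      rwa [← htail, ← neg_mul] at hderiv
    have hprop := eq_div_mul_of_hasDerivAt_eq_mul hode hasDerivAt_gaussianPDFReal_zero_one
      (fun x => (gaussianPDFReal_pos 0 1 x one_ne_zero).ne')
    have hconst : f 0 / gaussianPDFReal 0 1 0 = 1 := by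
      rw [← hint, integral_congr_ae (.of_forall hprop), integral_const_mul,
        integral_gaussianPDFReal_eq_one 0 one_ne_zero, mul_one]
    simpa [hconst] using hprop
  · rw [funext hgauss]
    exact integral_Ici_mul_gaussianPDFReal_zero_one x

/-- (Lemma 2 combined.) Among (normalized, mean-zero, unit-variance)
random variables with differentiable density `f` vanishing at infinity and finite
second moment, the LP weight function coincides with the density, i.e.
`∫_x^∞ z f(z) dz = f(x)` for all `x`, if and only if the density is the standard
normal density, i.e. the variable is Gaussian. -/
theorem weight_eq_density_iff_gaussian (f : ℝ → ℝ)
    (hf : ContDiff ℝ 1 f)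
    (hf0 : ∀ x, 0 ≤ f x)
    (htop : Filter.Tendsto f Filter.atTop (nhds 0))
    (hbot : Filter.Tendsto f Filter.atBot (nhds 0))
    (hint : ∫ x : ℝ, f x = 1)
    (hmom2 : Integrable (fun x => x ^ 2 * f x))
    (hmean : ∫ x : ℝ, x * f x = 0)
    (hvar : ∫ x : ℝ, x ^ 2 * f x = 1) :
    (∀ x : ℝ, ∫ z in Set.Ici x, z * f z = f x) ↔
      (∀ x : ℝ, f x = (Real.sqrt (2 * Real.pi))⁻¹ * Real.exp (-x ^ 2 / 2)) :=
  weight_eq_density_iff_gaussian_general f hf0 hint hmom2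
end

section
/- (Continuous state interaction.) Let S be a random state independent of a mean-zero shock X with 0 < E[X²] < ∞, let f̃: S-space → ℝ be measurable with Var(f̃(S)) > 0 and all relevant second moments finite. Define θ(s) = E[YX | S=s]/E[X²]. Then the population coefficient β₁ of S·f̃-interaction in the regression of Y on (X, f̃(S)X) satisfies β₁ = Cov(f̃(S), θ(S)) / Var(f̃(S)). In particular, β₁ = 0 iff f̃(S) and θ(S) are uncorrelated. -/
open MeasureTheory ProbabilityTheory

/-! Pulling the `σ(S)`-measurable factor `h(S)` out of `E[· | S]` gives
`E[h(S)·YX] = E[h(S)θ(S)]·E[X²]`, and independence gives `E[h(S)X²] = E[h(S)]·E[X²]`.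
Divided by `E[X²]`, the normal equations (`h = 1` and `h = f̃`) become the projection
equations of `θ(S)` on `(1, f̃(S))`, whose slope is `Cov(f̃(S), θ(S)) / Var(f̃(S))`. -/

theorem integral_mul_condExp_of_stronglyMeasurable {Ω : Type*} {m m₀ : MeasurableSpace Ω}
    {μ : Measure Ω} (hm : m ≤ m₀) [SigmaFinite (μ.trim hm)] {g Z : Ω → ℝ}
    (hg : StronglyMeasurable[m] g) (hgZ : Integrable (g * Z) μ) (hZ : Integrable Z μ) :
    ∫ ω, g ω * (μ[Z | m]) ω ∂μ = ∫ ω, g ω * Z ω ∂μ :=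
  calc ∫ ω, g ω * (μ[Z | m]) ω ∂μ = ∫ ω, (μ[g * Z | m]) ω ∂μ :=
        integral_congr_ae (condExp_mul_of_stronglyMeasurable_left hg hgZ hZ).symm
    _ = ∫ ω, g ω * Z ω ∂μ := integral_condExp hm

section

variable {Ω 𝒮 : Type*} [MeasurableSpace Ω] [m𝒮 : MeasurableSpace 𝒮] {μ : Measure Ω}
  [IsFiniteMeasure μ] {S : Ω → 𝒮} {X Y : Ω → ℝ} {θ : 𝒮 → ℝ}

theorem integral_comp_mul_of_condExp_comap_eq (hS : Measurable S)
    (hθ : ∀ᵐ ω ∂μ, (μ[fun ω' => Y ω' * X ω' | MeasurableSpace.comap S m𝒮]) ω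
      = θ (S ω) * ∫ ω', X ω' ^ 2 ∂μ)
    {h : 𝒮 → ℝ} (hh : Measurable h) (hYX : Integrable (fun ω => Y ω * X ω) μ)
    (hhYX : Integrable (fun ω => h (S ω) * (Y ω * X ω)) μ) :
    ∫ ω, h (S ω) * (Y ω * X ω) ∂μ = (∫ ω, h (S ω) * θ (S ω) ∂μ) * ∫ ω, X ω ^ 2 ∂μ := by
  have hm : MeasurableSpace.comap S m𝒮 ≤ ‹MeasurableSpace Ω› := hS.comap_le
  have hhS : StronglyMeasurable[MeasurableSpace.comap S m𝒮] (fun ω => h (S ω)) :=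
    (hh.comp (comap_measurable S)).stronglyMeasurable
  rw [← integral_mul_condExp_of_stronglyMeasurable hm hhS hhYX hYX, ← integral_mul_const]
  refine integral_congr_ae ?_
  filter_upwards [hθ] with ω hω
  rw [hω, mul_assoc]

theorem integral_normal_equation (hS : Measurable S) (hX : Measurable X) (hY : Measurable Y)
    (hindep : IndepFun X S μ)
    (hX2 : Integrable (fun ω => X ω ^ 2) μ) (hY2 : Integrable (fun ω => Y ω ^ 2) μ)
    (hθ : ∀ᵐ ω ∂μ, (μ[fun ω' => Y ω' * X ω' | MeasurableSpace.comap S m𝒮]) ω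
      = θ (S ω) * ∫ ω', X ω' ^ 2 ∂μ)
    {h k : 𝒮 → ℝ} (hh : Measurable h) (hk : Measurable k)
    (hhX : Integrable (fun ω => (h (S ω) * X ω) ^ 2) μ)
    (hkX : Integrable (fun ω => (k (S ω) * X ω) ^ 2) μ) (β₀ β₁ : ℝ) :
    ∫ ω, h (S ω) * X ω * (Y ω - X ω * β₀ - k (S ω) * X ω * β₁) ∂μ
      = ((∫ ω, h (S ω) * θ (S ω) ∂μ) - β₀ * (∫ ω, h (S ω) ∂μ)
          - β₁ * ∫ ω, h (S ω) * k (S ω) ∂μ) * ∫ ω, X ω ^ 2 ∂μ := by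
  have hXL2 : MemLp X 2 μ := (memLp_two_iff_integrable_sq hX.aestronglyMeasurable).2 hX2
  have hYL2 : MemLp Y 2 μ := (memLp_two_iff_integrable_sq hY.aestronglyMeasurable).2 hY2
  have hhXL2 : MemLp (fun ω => h (S ω) * X ω) 2 μ :=
    (memLp_two_iff_integrable_sq ((hh.comp hS).mul hX).aestronglyMeasurable).2 hhX
  have hkXL2 : MemLp (fun ω => k (S ω) * X ω) 2 μ :=
    (memLp_two_iff_integrable_sq ((hk.comp hS).mul hX).aestronglyMeasurable).2 hkX
  have hYX : Integrable (fun ω => Y ω * X ω) μ := hYL2.integrable_mul hXL2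
  have hhYX : Integrable (fun ω => h (S ω) * (Y ω * X ω)) μ :=
    (hhXL2.integrable_mul hYL2).congr (.of_forall fun ω => by simp only [Pi.mul_apply]; ring)
  have hhX2 : Integrable (fun ω => h (S ω) * X ω ^ 2) μ :=
    (hhXL2.integrable_mul hXL2).congr (.of_forall fun ω => by simp only [Pi.mul_apply]; ring)
  have hhkX2 : Integrable (fun ω => h (S ω) * k (S ω) * X ω ^ 2) μ :=
    (hhXL2.integrable_mul hkXL2).congr (.of_forall fun ω => by simp only [Pi.mul_apply]; ring)
  have hsq : Measurable fun x : ℝ => x ^ 2 := measurable_id.pow_const 2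
  have indep_h : ∫ ω, h (S ω) * X ω ^ 2 ∂μ = (∫ ω, h (S ω) ∂μ) * ∫ ω, X ω ^ 2 ∂μ :=
    hindep.symm.integral_comp_mul_comp hS.aemeasurable hX.aemeasurable
      hh.aestronglyMeasurable hsq.aestronglyMeasurable
  have indep_hk : ∫ ω, h (S ω) * k (S ω) * X ω ^ 2 ∂μ
      = (∫ ω, h (S ω) * k (S ω) ∂μ) * ∫ ω, X ω ^ 2 ∂μ :=
    hindep.symm.integral_comp_mul_comp hS.aemeasurable hX.aemeasurable
      (hh.mul hk).aestronglyMeasurable hsq.aestronglyMeasurable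
  calc ∫ ω, h (S ω) * X ω * (Y ω - X ω * β₀ - k (S ω) * X ω * β₁) ∂μ
      = ∫ ω, h (S ω) * (Y ω * X ω) - β₀ * (h (S ω) * X ω ^ 2)
          - β₁ * (h (S ω) * k (S ω) * X ω ^ 2) ∂μ :=
        integral_congr_ae (.of_forall fun ω => by ring)
    _ = _ := by
      rw [integral_sub _ (hhkX2.const_mul β₁), integral_sub hhYX (hhX2.const_mul β₀),
        integral_const_mul, integral_const_mul,
        integral_comp_mul_of_condExp_comap_eq hS hθ hh hYX hhYX, indep_h, indep_hk]
      · ring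
      · exact hhYX.sub (hhX2.const_mul β₀)

end

theorem continuous_state_lp_general {Ω 𝒮 : Type*} [MeasurableSpace Ω]
    [m𝒮 : MeasurableSpace 𝒮] (μ : Measure Ω) [IsProbabilityMeasure μ]
    (S : Ω → 𝒮) (ftil : 𝒮 → ℝ) (X Y : Ω → ℝ) (θ : 𝒮 → ℝ)
    (hSm : Measurable S) (hXm : Measurable X) (hYm : Measurable Y)
    (hfm : Measurable ftil)
    (hindep : IndepFun X S μ)
    (hX2 : Integrable (fun ω => X ω ^ 2) μ)
    (hvar : 0 < ∫ ω, X ω ^ 2 ∂μ)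
    (hY2 : Integrable (fun ω => Y ω ^ 2) μ)
    (hfX2 : Integrable (fun ω => (ftil (S ω) * X ω) ^ 2) μ)
    (hvarf : 0 < (∫ ω, (ftil (S ω)) ^ 2 ∂μ) - (∫ ω, ftil (S ω) ∂μ) ^ 2)
    -- `θ(s) = E[YX | S = s]/E[X²]`, stated via conditional expectation given `σ(S)`
    -- (using that independence gives `E[X² | S] = E[X²]`):
    (hθ : ∀ᵐ ω ∂μ,
      (μ[fun ω' => Y ω' * X ω' | MeasurableSpace.comap S m𝒮]) ω
        = θ (S ω) * ∫ ω', X ω' ^ 2 ∂μ) :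
    ∀ β₀ β₁ : ℝ,
      (∫ ω, X ω * (Y ω - X ω * β₀ - ftil (S ω) * X ω * β₁) ∂μ = 0) →
      (∫ ω, ftil (S ω) * X ω * (Y ω - X ω * β₀ - ftil (S ω) * X ω * β₁) ∂μ = 0) →
      β₁ = ((∫ ω, ftil (S ω) * θ (S ω) ∂μ)
              - (∫ ω, ftil (S ω) ∂μ) * ∫ ω, θ (S ω) ∂μ)
            / ((∫ ω, (ftil (S ω)) ^ 2 ∂μ) - (∫ ω, ftil (S ω) ∂μ) ^ 2) := by
  intro β₀ β₁ hnormal₁ hnormal₂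
  have hX2' : Integrable (fun ω => ((fun _ => (1 : ℝ)) (S ω) * X ω) ^ 2) μ := by
    simpa only [one_mul] using hX2
  have e₁ := integral_normal_equation hSm hXm hYm hindep hX2 hY2 hθ measurable_const hfm
    hX2' hfX2 β₀ β₁
  have e₂ := integral_normal_equation hSm hXm hYm hindep hX2 hY2 hθ hfm hfm hfX2 hfX2 β₀ β₁
  simp only [one_mul, integral_const, probReal_univ, smul_eq_mul, mul_one] at e₁
  rw [hnormal₁, eq_comm, mul_eq_zero, or_iff_left hvar.ne'] at e₁
  rw [hnormal₂, eq_comm, mul_eq_zero, or_iff_left hvar.ne'] at e₂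
  rw [eq_div_iff hvarf.ne']
  simp only [sq]
  linear_combination (∫ ω, ftil (S ω) ∂μ) * e₁ - e₂

/-- (Continuous state interaction.) With a state `S` independent of the
mean-zero shock `X`, the population interaction coefficient `β₁` of the regression of
`Y` on `(X, f̃(S)X)` — characterized by the normal equations — satisfies
`β₁ = Cov(f̃(S), θ(S)) / Var(f̃(S))`, where `θ(s) = E[YX | S = s]/E[X²]`. -/
theorem continuous_state_lp {Ω 𝒮 : Type*} [MeasurableSpace Ω]
    [m𝒮 : MeasurableSpace 𝒮] (μ : Measure Ω) [IsProbabilityMeasure μ]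
    (S : Ω → 𝒮) (ftil : 𝒮 → ℝ) (X Y : Ω → ℝ) (θ : 𝒮 → ℝ)
    (hSm : Measurable S) (hXm : Measurable X) (hYm : Measurable Y)
    (hfm : Measurable ftil)
    (hindep : IndepFun X S μ)
    (hmean : ∫ ω, X ω ∂μ = 0)
    (hX2 : Integrable (fun ω => X ω ^ 2) μ)
    (hvar : 0 < ∫ ω, X ω ^ 2 ∂μ)
    (hY2 : Integrable (fun ω => Y ω ^ 2) μ)
    (hf2 : Integrable (fun ω => (ftil (S ω)) ^ 2) μ)
    (hfX2 : Integrable (fun ω => (ftil (S ω) * X ω) ^ 2) μ)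
    (hθ2 : Integrable (fun ω => (θ (S ω)) ^ 2) μ)
    (hvarf : 0 < (∫ ω, (ftil (S ω)) ^ 2 ∂μ) - (∫ ω, ftil (S ω) ∂μ) ^ 2)
    -- `θ(s) = E[YX | S = s]/E[X²]`, stated via conditional expectation given `σ(S)`
    -- (using that independence gives `E[X² | S] = E[X²]`):
    (hθ : ∀ᵐ ω ∂μ,
      (μ[fun ω' => Y ω' * X ω' | MeasurableSpace.comap S m𝒮]) ω
        = θ (S ω) * ∫ ω', X ω' ^ 2 ∂μ) :
    ∀ β₀ β₁ : ℝ,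
      (∫ ω, X ω * (Y ω - X ω * β₀ - ftil (S ω) * X ω * β₁) ∂μ = 0) →
      (∫ ω, ftil (S ω) * X ω * (Y ω - X ω * β₀ - ftil (S ω) * X ω * β₁) ∂μ = 0) →
      β₁ = ((∫ ω, ftil (S ω) * θ (S ω) ∂μ)
              - (∫ ω, ftil (S ω) ∂μ) * ∫ ω, θ (S ω) ∂μ)
            / ((∫ ω, (ftil (S ω)) ^ 2 ∂μ) - (∫ ω, ftil (S ω) ∂μ) ^ 2) :=
  continuous_state_lp_general (m𝒮 := m𝒮) μ S ftil X Y θ hSm hXm hYm hfm hindep hX2 hvar hY2 hfX2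
    hvarf hθ
end

section
/- (Polynomial interaction as best L² approximation.) Under independence of the mean-zero shock X (with 0 < E[X²] < ∞) and the scalar state S, and square-integrability of all regressors, the population coefficient vector (β₀,…,β_{P−1}) of the regression of Y on (X, SX, S²X, …, S^{P−1}X) is the minimizer over b ∈ ℝ^P of E[(θ(S) − Σ_{p=0}^{P−1} S^p b_p)²], where θ(s) = E[YX | S=s]/E[X²]. -/
/-!
Conditioning on `S` and independence turn the population normal equations for the regressors
`S^p X` into `E[X²] · E[S^p (θ(S) - Σ_q S^q β_q)] = 0`: the tower property gives
`E[g(S) X Y] = E[X²] E[g(S) θ(S)]`, and independence gives `E[g(S) X²] = E[X²] E[g(S)]`.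
As `E[X²] > 0`, the residual `θ(S) - Σ_q S^q β_q` is `L²`-orthogonal to every polynomial in `S`
of degree `< P`, and Pythagoras gives minimality.
-/

open MeasureTheory ProbabilityTheory

section

variable {Ω : Type*} [MeasurableSpace Ω] {μ : Measure Ω}

theorem memLp_sum_mul {ι : Type*} [Fintype ι] {p : ENNReal} {g : ι → Ω → ℝ}
    (hg : ∀ i, MemLp (g i) p μ) (c : ι → ℝ) : MemLp (fun ω => ∑ i, g i ω * c i) p μ :=
  memLp_finsetSum _ fun i _ => (hg i).mul_const (c i)

theorem integral_sq_le_integral_add_sq {r d : Ω → ℝ} (hr : MemLp r 2 μ) (hd : MemLp d 2 μ)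
    (horth : ∫ ω, r ω * d ω ∂μ = 0) :
    ∫ ω, r ω ^ 2 ∂μ ≤ ∫ ω, (r ω + d ω) ^ 2 ∂μ := by
  have hrd : Integrable (fun ω => r ω * d ω) μ := hr.integrable_mul hd
  have hexpand : ∫ ω, (r ω + d ω) ^ 2 ∂μ = ∫ ω, r ω ^ 2 ∂μ + ∫ ω, d ω ^ 2 ∂μ := by
    calc ∫ ω, (r ω + d ω) ^ 2 ∂μ = ∫ ω, r ω ^ 2 + 2 * (r ω * d ω) + d ω ^ 2 ∂μ := by
          congr 1; ext ω; ring
      _ = ∫ ω, r ω ^ 2 ∂μ + ∫ ω, d ω ^ 2 ∂μ := by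
          rw [integral_add (hr.integrable_sq.fun_add (hrd.const_mul 2)) hd.integrable_sq,
            integral_add hr.integrable_sq (hrd.const_mul 2), integral_const_mul, horth,
            mul_zero, add_zero]
  rw [hexpand]
  exact le_add_of_nonneg_right (integral_nonneg fun ω => sq_nonneg (d ω))

theorem integral_sq_sub_sum_le_of_orthogonal {ι : Type*} [Fintype ι] {f : Ω → ℝ}
    {g : ι → Ω → ℝ} (hf : MemLp f 2 μ) (hg : ∀ i, MemLp (g i) 2 μ) {β : ι → ℝ}
    (horth : ∀ i, ∫ ω, g i ω * (f ω - ∑ j, g j ω * β j) ∂μ = 0) (b : ι → ℝ) :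
    ∫ ω, (f ω - ∑ j, g j ω * β j) ^ 2 ∂μ ≤ ∫ ω, (f ω - ∑ j, g j ω * b j) ^ 2 ∂μ := by
  set r := fun ω => f ω - ∑ j, g j ω * β j
  have hr : MemLp r 2 μ := hf.sub (memLp_sum_mul hg β)
  have hsplit : ∀ ω, f ω - ∑ j, g j ω * b j = r ω + ∑ j, g j ω * (β j - b j) := by
    intro ω
    simp only [r, mul_sub, Finset.sum_sub_distrib]
    ring
  have horth' : ∫ ω, r ω * ∑ j, g j ω * (β j - b j) ∂μ = 0 := by
    calc ∫ ω, r ω * ∑ j, g j ω * (β j - b j) ∂μ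
        = ∫ ω, ∑ j, (β j - b j) * (g j ω * r ω) ∂μ := by
          congr 1; ext ω; rw [Finset.mul_sum]; exact Finset.sum_congr rfl fun j _ => by ring
      _ = ∑ j, (β j - b j) * ∫ ω, g j ω * r ω ∂μ := by
          rw [integral_finsetSum _ fun j _ => ?_]
          · simp only [integral_const_mul]
          · exact ((hg j).integrable_mul hr).const_mul _
      _ = 0 := Finset.sum_eq_zero fun j _ => by rw [horth j, mul_zero]
  simp only [hsplit]
  exact integral_sq_le_integral_add_sq hr (memLp_sum_mul hg _) horth'

namespace ProbabilityTheory

variable {E : Type*} [MeasurableSpace E] {S : Ω → E} {X Y : Ω → ℝ} {g h : E → ℝ}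

theorem integral_comp_mul_eq_of_condExp_eq [IsFiniteMeasure μ] (hS : Measurable S)
    {Z : Ω → ℝ} {θ : E → ℝ} {c : ℝ} (hg : Measurable g) (hZ : Integrable Z μ)
    (hgZ : Integrable (fun ω => g (S ω) * Z ω) μ)
    (hθ : μ[Z | MeasurableSpace.comap S inferInstance] =ᵐ[μ] fun ω => θ (S ω) * c) :
    ∫ ω, g (S ω) * Z ω ∂μ = c * ∫ ω, g (S ω) * θ (S ω) ∂μ := by
  have hgS : StronglyMeasurable[MeasurableSpace.comap S inferInstance] fun ω => g (S ω) :=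
    (hg.comp (comap_measurable S)).stronglyMeasurable
  calc ∫ ω, g (S ω) * Z ω ∂μ
      = ∫ ω, (μ[(fun ω => g (S ω)) * Z | MeasurableSpace.comap S inferInstance]) ω ∂μ :=
        (integral_condExp hS.comap_le).symm
    _ = ∫ ω, g (S ω) * (θ (S ω) * c) ∂μ := by
        refine integral_congr_ae ?_
        filter_upwards [condExp_mul_of_stronglyMeasurable_left hgS hgZ hZ, hθ] with ω hpull hω
        rw [hpull, Pi.mul_apply, hω]
    _ = c * ∫ ω, g (S ω) * θ (S ω) ∂μ := by
        rw [← integral_const_mul]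
        congr 1; ext ω; ring

theorem IndepFun.integral_comp_mul_sq (hind : IndepFun X S μ) (hX : AEMeasurable X μ)
    (hS : AEMeasurable S μ) (hg : Measurable g) :
    ∫ ω, g (S ω) * X ω ^ 2 ∂μ = (∫ ω, X ω ^ 2 ∂μ) * ∫ ω, g (S ω) ∂μ := by
  rw [← hind.integral_fun_comp_mul_comp (f := fun x => x ^ 2) hX hS
    (measurable_id.pow_const 2).aestronglyMeasurable hg.aestronglyMeasurable]
  congr 1; ext ω; ring

theorem IndepFun.memLp_comp_mul (hind : IndepFun X S μ) (hX : MemLp X 2 μ) (hg : Measurable g)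
    (hgS : MemLp (fun ω => g (S ω)) 2 μ) : MemLp (fun ω => g (S ω) * X ω) 2 μ := by
  refine (memLp_two_iff_integrable_sq (hgS.1.mul hX.1)).2 ?_
  have hind_sq := hind.comp (measurable_id.pow_const 2) (hg.pow_const 2)
  refine (hind_sq.integrable_mul hX.integrable_sq hgS.integrable_sq).congr (ae_of_all _ ?_)
  intro ω
  simp only [Pi.mul_apply, Function.comp_apply, id]
  ring

theorem integral_comp_mul_residual_eq [IsFiniteMeasure μ] (hS : Measurable S)
    (hind : IndepFun X S μ) (hX : MemLp X 2 μ) (hY : MemLp Y 2 μ)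
    {θ : E → ℝ} (hg : Measurable g) (hh : Measurable h) (hgS : MemLp (fun ω => g (S ω)) 2 μ)
    (hhS : MemLp (fun ω => h (S ω)) 2 μ) (hθS : MemLp (fun ω => θ (S ω)) 2 μ)
    (hθ : μ[fun ω => Y ω * X ω | MeasurableSpace.comap S inferInstance]
      =ᵐ[μ] fun ω => θ (S ω) * ∫ ω, X ω ^ 2 ∂μ) :
    ∫ ω, g (S ω) * X ω * (Y ω - h (S ω) * X ω) ∂μ
      = (∫ ω, X ω ^ 2 ∂μ) * ∫ ω, g (S ω) * (θ (S ω) - h (S ω)) ∂μ := by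
  have hgXY : Integrable (fun ω => g (S ω) * (Y ω * X ω)) μ :=
    ((hind.memLp_comp_mul hX hg hgS).integrable_mul hY).congr
      (ae_of_all _ fun ω => by simp only [Pi.mul_apply]; ring)
  have hghX : Integrable (fun ω => g (S ω) * h (S ω) * X ω ^ 2) μ :=
    ((hind.memLp_comp_mul hX hg hgS).integrable_mul (hind.memLp_comp_mul hX hh hhS)).congr
      (ae_of_all _ fun ω => by simp only [Pi.mul_apply]; ring)
  have hgθ : Integrable (fun ω => g (S ω) * θ (S ω)) μ := hgS.integrable_mul hθS
  have hgh : Integrable (fun ω => g (S ω) * h (S ω)) μ := hgS.integrable_mul hhS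
  calc ∫ ω, g (S ω) * X ω * (Y ω - h (S ω) * X ω) ∂μ
      = ∫ ω, g (S ω) * (Y ω * X ω) ∂μ - ∫ ω, g (S ω) * h (S ω) * X ω ^ 2 ∂μ := by
        rw [← integral_sub hgXY hghX]
        congr 1; ext ω; ring
    _ = (∫ ω, X ω ^ 2 ∂μ) * (∫ ω, g (S ω) * θ (S ω) ∂μ - ∫ ω, g (S ω) * h (S ω) ∂μ) := by
        rw [integral_comp_mul_eq_of_condExp_eq (Z := fun ω => Y ω * X ω) hS hg
            (hY.integrable_mul hX) hgXY hθ,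
          hind.integral_comp_mul_sq (g := fun s => g s * h s) hX.1.aemeasurable hS.aemeasurable
            (hg.mul hh), mul_sub]
    _ = (∫ ω, X ω ^ 2 ∂μ) * ∫ ω, g (S ω) * (θ (S ω) - h (S ω)) ∂μ := by
        rw [← integral_sub hgθ hgh]
        congr 2; ext ω; ring

end ProbabilityTheory

end

theorem polynomial_interaction_best_approx_general {Ω : Type*} [MeasurableSpace Ω]
    (μ : Measure Ω) [IsProbabilityMeasure μ] {P : ℕ}
    (S X Y : Ω → ℝ) (θ : ℝ → ℝ)
    (hSm : Measurable S) (hXm : Measurable X) (hYm : Measurable Y)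
    (hθm : Measurable θ)
    (hindep : IndepFun X S μ)
    (hX2 : Integrable (fun ω => X ω ^ 2) μ)
    (hvar : 0 < ∫ ω, X ω ^ 2 ∂μ)
    (hY2 : Integrable (fun ω => Y ω ^ 2) μ)
    (hS2 : ∀ p : Fin P, Integrable (fun ω => (S ω ^ (p : ℕ)) ^ 2) μ)
    (hθ2 : Integrable (fun ω => (θ (S ω)) ^ 2) μ)
    -- `θ(s) = E[YX | S = s]/E[X²]`, via conditional expectation given `σ(S)`:
    (hθ : ∀ᵐ ω ∂μ,
      (μ[fun ω' => Y ω' * X ω' | MeasurableSpace.comap S inferInstance]) ω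
        = θ (S ω) * ∫ ω', X ω' ^ 2 ∂μ) :
    ∀ β : Fin P → ℝ,
      (∀ p : Fin P,
        ∫ ω, S ω ^ (p : ℕ) * X ω *
          (Y ω - ∑ q : Fin P, S ω ^ (q : ℕ) * X ω * β q) ∂μ = 0) →
      ∀ b : Fin P → ℝ,
        ∫ ω, (θ (S ω) - ∑ p : Fin P, S ω ^ (p : ℕ) * β p) ^ 2 ∂μ
          ≤ ∫ ω, (θ (S ω) - ∑ p : Fin P, S ω ^ (p : ℕ) * b p) ^ 2 ∂μ := by
  intro β hβ b
  have hXL2 : MemLp X 2 μ := (memLp_two_iff_integrable_sq hXm.aestronglyMeasurable).2 hX2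
  have hYL2 : MemLp Y 2 μ := (memLp_two_iff_integrable_sq hYm.aestronglyMeasurable).2 hY2
  have hθL2 : MemLp (fun ω => θ (S ω)) 2 μ :=
    (memLp_two_iff_integrable_sq (hθm.comp hSm).aestronglyMeasurable).2 hθ2
  have hpowL2 : ∀ p : Fin P, MemLp (fun ω => S ω ^ (p : ℕ)) 2 μ := fun p =>
    (memLp_two_iff_integrable_sq (hSm.pow_const _).aestronglyMeasurable).2 (hS2 p)
  refine integral_sq_sub_sum_le_of_orthogonal hθL2 hpowL2 (fun p => ?_) b
  have hnormal : ∫ ω, S ω ^ (p : ℕ) * X ω *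
      (Y ω - (∑ q : Fin P, S ω ^ (q : ℕ) * β q) * X ω) ∂μ = 0 := by
    simpa only [Finset.sum_mul, mul_right_comm _ (β _) (X _)] using hβ p
  rw [integral_comp_mul_residual_eq (g := fun s => s ^ (p : ℕ))
    (h := fun s => ∑ q : Fin P, s ^ (q : ℕ) * β q) hSm hindep hXL2 hYL2
    (measurable_id.pow_const _) (by fun_prop) (hpowL2 p) (memLp_sum_mul hpowL2 β) hθL2 hθ]
    at hnormal
  exact (mul_eq_zero.mp hnormal).resolve_left hvar.ne'

/-- (Polynomial interaction as best L² approximation.) With a scalar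
state `S` independent of the mean-zero shock `X`, the population coefficient vector
`(β₀,…,β_{P−1})` of the regression of `Y` on `(X, SX, …, S^{P−1}X)` — characterized by
the normal equations — minimizes `b ↦ E[(θ(S) − Σ_p S^p b_p)²]` over `b ∈ ℝᴾ`, where
`θ(s) = E[YX | S = s]/E[X²]`. -/
theorem polynomial_interaction_best_approx {Ω : Type*} [MeasurableSpace Ω]
    (μ : Measure Ω) [IsProbabilityMeasure μ] {P : ℕ}
    (S X Y : Ω → ℝ) (θ : ℝ → ℝ)
    (hSm : Measurable S) (hXm : Measurable X) (hYm : Measurable Y)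
    (hθm : Measurable θ)
    (hindep : IndepFun X S μ)
    (hmean : ∫ ω, X ω ∂μ = 0)
    (hX2 : Integrable (fun ω => X ω ^ 2) μ)
    (hvar : 0 < ∫ ω, X ω ^ 2 ∂μ)
    (hY2 : Integrable (fun ω => Y ω ^ 2) μ)
    (hreg2 : ∀ p : Fin P, Integrable (fun ω => (S ω ^ (p : ℕ) * X ω) ^ 2) μ)
    (hS2 : ∀ p : Fin P, Integrable (fun ω => (S ω ^ (p : ℕ)) ^ 2) μ)
    (hθ2 : Integrable (fun ω => (θ (S ω)) ^ 2) μ)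
    (hinv : IsUnit (Matrix.of fun i j : Fin P =>
      ∫ ω, S ω ^ (i : ℕ) * S ω ^ (j : ℕ) ∂μ : Matrix (Fin P) (Fin P) ℝ).det)
    -- `θ(s) = E[YX | S = s]/E[X²]`, via conditional expectation given `σ(S)`:
    (hθ : ∀ᵐ ω ∂μ,
      (μ[fun ω' => Y ω' * X ω' | MeasurableSpace.comap S inferInstance]) ω
        = θ (S ω) * ∫ ω', X ω' ^ 2 ∂μ) :
    ∀ β : Fin P → ℝ,
      (∀ p : Fin P,
        ∫ ω, S ω ^ (p : ℕ) * X ω *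
          (Y ω - ∑ q : Fin P, S ω ^ (q : ℕ) * X ω * β q) ∂μ = 0) →
      ∀ b : Fin P → ℝ,
        ∫ ω, (θ (S ω) - ∑ p : Fin P, S ω ^ (p : ℕ) * β p) ^ 2 ∂μ
          ≤ ∫ ω, (θ (S ω) - ∑ p : Fin P, S ω ^ (p : ℕ) * b p) ^ 2 ∂μ :=
  polynomial_interaction_best_approx_general μ S X Y θ hSm hXm hYm hθm hindep hX2 hvar hY2 hS2 hθ2
    hθ
end

section
/- (LATE as special case.) Let Z, X ∈ {0,1} with Z randomly assigned (independent of potential outcomes and compliance type), potential outcomes Y(0), Y(1), potential treatments X(0), X(1) satisfying monotonicity X(1) ≥ X(0), and P(X(1) > X(0)) > 0. Then Cov(Y, Z)/Cov(X, Z) = E[Y(1) − Y(0) | X(1) > X(0)], the local average treatment effect for compliers. -/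
open MeasureTheory ProbabilityTheory Set

/-!
The realized outcome is `Y(X(Z)) = A(Z)` with `A(z) := Y(X(z))`. For a binary `Z` independent of
`(A(0), A(1))`, writing `A(Z) = A(0) + Z (A(1) - A(0))` and using `Z² = Z` gives
`Cov(A(Z), Z) = Var Z · E[A(1) - A(0)]`, and likewise `Cov(X, Z) = Var Z · E[X(1) - X(0)]`.
With binary treatments and monotonicity, `A(1) - A(0)` is `Y(1) - Y(0)` on the compliers
`C = {X(0) < X(1)}` and `0` elsewhere, while `X(1) - X(0)` is the indicator of `C`; so the
factor `Var Z = P(Z = 1) P(Z = 0) > 0` cancels in the Wald ratio.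
-/

lemma ite_sub_ite_eq_ite_lt {x0 x1 : ℝ} (hx0 : x0 = 0 ∨ x0 = 1) (hx1 : x1 = 0 ∨ x1 = 1)
    (hle : x0 ≤ x1) {α : Type*} [AddGroup α] (a b : α) :
    (if x1 = 1 then b else a) - (if x0 = 1 then b else a) = if x0 < x1 then b - a else 0 := by
  rcases hx0 with rfl | rfl <;> rcases hx1 with rfl | rfl
  · simp
  · simp
  · norm_num at hle
  · simp

lemma Measurable.ite_eq_one {α : Type*} [MeasurableSpace α] {x y0 y1 : α → ℝ}
    (hx : Measurable x) (hy0 : Measurable y0) (hy1 : Measurable y1) :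
    Measurable fun a => if x a = 1 then y1 a else y0 a :=
  Measurable.ite (hx (measurableSet_singleton 1)) hy1 hy0

section Instrument

variable {Ω : Type*} [MeasurableSpace Ω] {μ : Measure Ω}

lemma integral_eq_measureReal_of_eq_zero_or_one {f : Ω → ℝ} (hf : ∀ ω, f ω = 0 ∨ f ω = 1)
    (hfm : Measurable f) : ∫ ω, f ω ∂μ = μ.real {ω | f ω = 1} := by
  have hf_ind : f = {ω | f ω = 1}.indicator 1 := by
    funext ω
    rcases hf ω with h | h <;> simp [h]
  conv_lhs => rw [hf_ind]
  exact integral_indicator_one (hfm (measurableSet_singleton 1))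

lemma one_sub_integral_eq_measureReal_of_eq_zero_or_one [IsProbabilityMeasure μ] {f : Ω → ℝ}
    (hf : ∀ ω, f ω = 0 ∨ f ω = 1) (hfm : Measurable f) :
    1 - ∫ ω, f ω ∂μ = μ.real {ω | f ω = 0} := by
  have hcompl : {ω | f ω = 1}ᶜ = {ω | f ω = 0} := by
    ext ω
    rcases hf ω with h | h <;> simp [h]
  rw [integral_eq_measureReal_of_eq_zero_or_one hf hfm, ← hcompl,
    probReal_compl_eq_one_sub (s := {ω | f ω = 1}) (hfm (measurableSet_singleton 1))]

lemma integrable_of_eq_zero_or_one [IsFiniteMeasure μ] {f : Ω → ℝ}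
    (hf : ∀ ω, f ω = 0 ∨ f ω = 1) (hfm : AEStronglyMeasurable f μ) : Integrable f μ :=
  (integrable_const (1 : ℝ)).mono hfm (.of_forall fun ω => by rcases hf ω with h | h <;> simp [h])

lemma integrable_ite_eq_one {x y0 y1 : Ω → ℝ} (hx : Measurable x)
    (hy0 : Integrable y0 μ) (hy1 : Integrable y1 μ) :
    Integrable (fun ω => if x ω = 1 then y1 ω else y0 ω) μ := by
  classical
  exact Integrable.piecewise (s := {ω | x ω = 1}) (hx (measurableSet_singleton 1))
    hy1.integrableOn hy0.integrableOn

lemma integral_ite_mul_sub_integral_mul_integral {Z V0 V1 : Ω → ℝ}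
    (hZ : ∀ ω, Z ω = 0 ∨ Z ω = 1) (hZm : AEStronglyMeasurable Z μ)
    (hV0 : Integrable V0 μ) (hV1 : Integrable V1 μ)
    (hindep : IndepFun Z (fun ω => (V0 ω, V1 ω)) μ) :
    (∫ ω, (if Z ω = 1 then V1 ω else V0 ω) * Z ω ∂μ)
        - (∫ ω, (if Z ω = 1 then V1 ω else V0 ω) ∂μ) * ∫ ω, Z ω ∂μ
      = (∫ ω, Z ω ∂μ) * (1 - ∫ ω, Z ω ∂μ) * ∫ ω, (V1 ω - V0 ω) ∂μ := by
  have hZV1 : IndepFun Z V1 μ := hindep.comp measurable_id measurable_snd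
  have hZD : IndepFun Z (fun ω => V1 ω - V0 ω) μ :=
    hindep.comp measurable_id (measurable_snd.sub measurable_fst)
  have hmul : ∀ ω, (if Z ω = 1 then V1 ω else V0 ω) * Z ω = Z ω * V1 ω := fun ω => by
    rcases hZ ω with h | h <;> simp [h]
  have hsplit : ∀ ω, (if Z ω = 1 then V1 ω else V0 ω) = V0 ω + Z ω * (V1 ω - V0 ω) :=
    fun ω => by rcases hZ ω with h | h <;> simp [h]
  have hZD_int : Integrable (fun ω => Z ω * (V1 ω - V0 ω)) μ :=
    (hV1.sub hV0).bdd_mul hZm (c := 1)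
      (.of_forall fun ω => by rcases hZ ω with h | h <;> simp [h])
  simp_rw [hmul, hsplit]
  rw [hZV1.integral_fun_mul_eq_mul_integral hZm hV1.1, integral_add hV0 hZD_int,
    hZD.integral_fun_mul_eq_mul_integral hZm (hV1.sub hV0).1, integral_sub hV1 hV0]
  ring

lemma ProbabilityTheory.IndepFun.ite_eq_one_prodMk {β : Type*} [MeasurableSpace β] {Z : Ω → β}
    {Y0 Y1 X0 X1 : Ω → ℝ} (hindep : IndepFun Z (fun ω => (Y0 ω, Y1 ω, X0 ω, X1 ω)) μ) :
    IndepFun Z (fun ω => (if X0 ω = 1 then Y1 ω else Y0 ω, if X1 ω = 1 then Y1 ω else Y0 ω)) μ :=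
  hindep.comp measurable_id (ψ := fun p : ℝ × ℝ × ℝ × ℝ =>
    (if p.2.2.1 = 1 then p.2.1 else p.1, if p.2.2.2 = 1 then p.2.1 else p.1))
    ((Measurable.ite_eq_one (by fun_prop) (by fun_prop) (by fun_prop)).prodMk
      (Measurable.ite_eq_one (by fun_prop) (by fun_prop) (by fun_prop)))

variable {X0 X1 : Ω → ℝ}

lemma integral_ite_sub_ite_eq_setIntegral {Y0 Y1 : Ω → ℝ} (hX0 : ∀ ω, X0 ω = 0 ∨ X0 ω = 1)
    (hX1 : ∀ ω, X1 ω = 0 ∨ X1 ω = 1) (hmono : ∀ ω, X0 ω ≤ X1 ω)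
    (hC : MeasurableSet {ω | X0 ω < X1 ω}) :
    ∫ ω, ((if X1 ω = 1 then Y1 ω else Y0 ω) - (if X0 ω = 1 then Y1 ω else Y0 ω)) ∂μ
      = ∫ ω in {ω | X0 ω < X1 ω}, (Y1 ω - Y0 ω) ∂μ := by
  rw [← integral_indicator hC]
  congr 1 with ω
  rw [indicator_apply]
  exact ite_sub_ite_eq_ite_lt (hX0 ω) (hX1 ω) (hmono ω) (Y0 ω) (Y1 ω)

lemma integral_sub_eq_measureReal_lt (hX0 : ∀ ω, X0 ω = 0 ∨ X0 ω = 1)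
    (hX1 : ∀ ω, X1 ω = 0 ∨ X1 ω = 1) (hmono : ∀ ω, X0 ω ≤ X1 ω)
    (hC : MeasurableSet {ω | X0 ω < X1 ω}) :
    ∫ ω, (X1 ω - X0 ω) ∂μ = μ.real {ω | X0 ω < X1 ω} := by
  have hbin : ∀ {x : ℝ}, x = 0 ∨ x = 1 → (if x = 1 then 1 else 0) = x := by
    rintro x (rfl | rfl) <;> simp
  calc ∫ ω, (X1 ω - X0 ω) ∂μ
      = ∫ ω, ((if X1 ω = 1 then 1 else 0) - (if X0 ω = 1 then 1 else 0)) ∂μ := by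
        congr 1 with ω
        rw [hbin (hX0 ω), hbin (hX1 ω)]
    _ = ∫ ω in {ω | X0 ω < X1 ω}, ((1 : ℝ) - 0) ∂μ :=
        integral_ite_sub_ite_eq_setIntegral hX0 hX1 hmono hC
    _ = μ.real {ω | X0 ω < X1 ω} := by simp

end Instrument

theorem late_special_case_general {Ω : Type*} [MeasurableSpace Ω]
    (μ : Measure Ω) [IsProbabilityMeasure μ]
    (Z X0 X1 Y0 Y1 : Ω → ℝ)
    (hZm : Measurable Z) (hX0m : Measurable X0) (hX1m : Measurable X1)
    (hZbin : ∀ ω, Z ω = 0 ∨ Z ω = 1)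
    (hXbin : ∀ ω, (X0 ω = 0 ∨ X0 ω = 1) ∧ (X1 ω = 0 ∨ X1 ω = 1))
    (hY0int : Integrable Y0 μ) (hY1int : Integrable Y1 μ)
    -- random assignment: `Z ⊥⊥ (Y(0), Y(1), X(0), X(1))`, with `0 < P(Z=1) < 1`
    (hindep : IndepFun Z (fun ω => (Y0 ω, Y1 ω, X0 ω, X1 ω)) μ)
    (hZ1 : 0 < μ {ω | Z ω = 1}) (hZ0 : 0 < μ {ω | Z ω = 0})
    -- monotonicity and existence of compliers
    (hmono : ∀ ω, X0 ω ≤ X1 ω) :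
    ((∫ ω, (if (if Z ω = 1 then X1 ω else X0 ω) = 1 then Y1 ω else Y0 ω) * Z ω ∂μ)
        - (∫ ω, (if (if Z ω = 1 then X1 ω else X0 ω) = 1 then Y1 ω else Y0 ω) ∂μ)
            * ∫ ω, Z ω ∂μ)
      / ((∫ ω, (if Z ω = 1 then X1 ω else X0 ω) * Z ω ∂μ)
          - (∫ ω, (if Z ω = 1 then X1 ω else X0 ω) ∂μ) * ∫ ω, Z ω ∂μ)
      = (∫ ω in {ω | X0 ω < X1 ω}, (Y1 ω - Y0 ω) ∂μ)
          / (μ {ω | X0 ω < X1 ω}).toReal := by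
  have hX0 : ∀ ω, X0 ω = 0 ∨ X0 ω = 1 := fun ω => (hXbin ω).1
  have hX1 : ∀ ω, X1 ω = 0 ∨ X1 ω = 1 := fun ω => (hXbin ω).2
  have hC : MeasurableSet {ω | X0 ω < X1 ω} := measurableSet_lt hX0m hX1m
  set A0 : Ω → ℝ := fun ω => if X0 ω = 1 then Y1 ω else Y0 ω
  set A1 : Ω → ℝ := fun ω => if X1 ω = 1 then Y1 ω else Y0 ω
  have hY : ∀ ω, (if (if Z ω = 1 then X1 ω else X0 ω) = 1 then Y1 ω else Y0 ω)
      = if Z ω = 1 then A1 ω else A0 ω :=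
    fun ω => apply_ite (fun x => if x = 1 then Y1 ω else Y0 ω) _ _ _
  have hindepA : IndepFun Z (fun ω => (A0 ω, A1 ω)) μ := hindep.ite_eq_one_prodMk
  have hindepX : IndepFun Z (fun ω => (X0 ω, X1 ω)) μ :=
    hindep.comp measurable_id (ψ := fun p : ℝ × ℝ × ℝ × ℝ => (p.2.2.1, p.2.2.2)) (by fun_prop)
  have hvar_pos : 0 < (∫ ω, Z ω ∂μ) * (1 - ∫ ω, Z ω ∂μ) := by
    rw [one_sub_integral_eq_measureReal_of_eq_zero_or_one hZbin hZm,
      integral_eq_measureReal_of_eq_zero_or_one hZbin hZm]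
    exact mul_pos (ENNReal.toReal_pos hZ1.ne' (measure_ne_top _ _))
      (ENNReal.toReal_pos hZ0.ne' (measure_ne_top _ _))
  simp_rw [hY]
  rw [integral_ite_mul_sub_integral_mul_integral hZbin hZm.aestronglyMeasurable
      (integrable_ite_eq_one hX0m hY0int hY1int) (integrable_ite_eq_one hX1m hY0int hY1int)
      hindepA,
    integral_ite_mul_sub_integral_mul_integral hZbin hZm.aestronglyMeasurable
      (integrable_of_eq_zero_or_one hX0 hX0m.aestronglyMeasurable)
      (integrable_of_eq_zero_or_one hX1 hX1m.aestronglyMeasurable) hindepX,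
    integral_ite_sub_ite_eq_setIntegral hX0 hX1 hmono hC,
    integral_sub_eq_measureReal_lt hX0 hX1 hmono hC, mul_div_mul_left _ _ hvar_pos.ne']
  rfl

/-- (LATE as special case.) With a randomly assigned binary instrument
`Z`, binary potential treatments `X(0) ≤ X(1)` (monotonicity, some compliers), and
potential outcomes `Y(0), Y(1)`, the population IV (Wald) estimand
`Cov(Y,Z)/Cov(X,Z)` equals the local average treatment effect
`E[Y(1) − Y(0) | X(1) > X(0)]` for compliers, where `X = X(Z)` and `Y = Y(X)`. -/
theorem late_special_case {Ω : Type*} [MeasurableSpace Ω]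
    (μ : Measure Ω) [IsProbabilityMeasure μ]
    (Z X0 X1 Y0 Y1 : Ω → ℝ)
    (hZm : Measurable Z) (hX0m : Measurable X0) (hX1m : Measurable X1)
    (hY0m : Measurable Y0) (hY1m : Measurable Y1)
    (hZbin : ∀ ω, Z ω = 0 ∨ Z ω = 1)
    (hXbin : ∀ ω, (X0 ω = 0 ∨ X0 ω = 1) ∧ (X1 ω = 0 ∨ X1 ω = 1))
    (hY0int : Integrable Y0 μ) (hY1int : Integrable Y1 μ)
    -- random assignment: `Z ⊥⊥ (Y(0), Y(1), X(0), X(1))`, with `0 < P(Z=1) < 1`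
    (hindep : IndepFun Z (fun ω => (Y0 ω, Y1 ω, X0 ω, X1 ω)) μ)
    (hZ1 : 0 < μ {ω | Z ω = 1}) (hZ0 : 0 < μ {ω | Z ω = 0})
    -- monotonicity and existence of compliers
    (hmono : ∀ ω, X0 ω ≤ X1 ω)
    (hcompl : 0 < μ {ω | X0 ω < X1 ω}) :
    ((∫ ω, (if (if Z ω = 1 then X1 ω else X0 ω) = 1 then Y1 ω else Y0 ω) * Z ω ∂μ)
        - (∫ ω, (if (if Z ω = 1 then X1 ω else X0 ω) = 1 then Y1 ω else Y0 ω) ∂μ)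
            * ∫ ω, Z ω ∂μ)
      / ((∫ ω, (if Z ω = 1 then X1 ω else X0 ω) * Z ω ∂μ)
          - (∫ ω, (if Z ω = 1 then X1 ω else X0 ω) ∂μ) * ∫ ω, Z ω ∂μ)
      = (∫ ω in {ω | X0 ω < X1 ω}, (Y1 ω - Y0 ω) ∂μ)
          / (μ {ω | X0 ω < X1 ω}).toReal :=
  late_special_case_general μ Z X0 X1 Y0 Y1 hZm hX0m hX1m hZbin hXbin hY0int hY1int hindep hZ1 hZ0
    hmono
end

section
/- (Spurious state dependence in LP-IV, Example: government spending.) Let Z ~ N(0,1), M > 0, m > 0, δ ∈ (0,1), c ∈ (0,1). Define ψ(x) = mx for x < M and ψ(x) = mx − (x−M)δm for x ≥ M; X(z,0) = z; X(z,1) = z for z < M and z − (z−M)c for z ≥ M. Define θ_IV(0) = ∫φ(z)ψ'(X(z,0))dz and θ_IV(1) = ∫φ(z)ψ'(X(z,1))X'(z,1)dz / ∫φ(z)X'(z,1)dz, where φ is the standard normal density. Then θ_IV(0) = m(Φ(M) + (1−Φ(M))(1−δ)), θ_IV(1) = m(Φ(M) + (1−Φ(M))(1−δ)(1−c))/(Φ(M)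 + (1−Φ(M))(1−c)), and β₁ := θ_IV(1) − θ_IV(0) > 0 whenever δ > 0 and c > 0. -/
open MeasureTheory Set Real

/-- Standard normal density. -/
noncomputable def stdNormalPDF (z : ℝ) : ℝ :=
  (Real.sqrt (2 * Real.pi))⁻¹ * Real.exp (-z ^ 2 / 2)

/-- Standard normal CDF. -/
noncomputable def stdNormalCDF (x : ℝ) : ℝ :=
  ∫ z in Set.Iic x, stdNormalPDF z

/-- The kinked output function `ψ` of the government-spending example:
`ψ(x) = mx` for `x < M` and `ψ(x) = mx − (x−M)δm` for `x ≥ M`. Its a.e. derivative is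
`ψ'(x) = m − 1[x ≥ M]·δm`. -/
noncomputable def psiDeriv (M m δ x : ℝ) : ℝ :=
  if x < M then m else m * (1 - δ)

/-- First stage `X(z,s)`: pass-through of military spending shocks into government
spending; `X(z,0) = z`, and `X(z,1) = z` for `z < M`, `z − (z−M)c` for `z ≥ M`. -/
noncomputable def Xstage (M c : ℝ) (s : ℕ) (z : ℝ) : ℝ :=
  if s = 0 then z else (if z < M then z else z - (z - M) * c)

/-- The a.e. derivative `X'(z,s)` of the first stage in `z`. -/
noncomputable def XstageDeriv (M c : ℝ) (s : ℕ) (z : ℝ) : ℝ :=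
  if s = 0 then 1 else (if z < M then 1 else 1 - c)

/-! The first-stage weight `X'(z,1)` equals `1` below the kink and `1 − c` above it, and since
`c ≤ 1` the kink of `X(·,1)` sits at the same point as that of `ψ`. So both IV estimands are
weighted averages of the two slopes `m` and `m(1 − δ)` of `ψ`: the state-0 estimand uses the
normal weights `Φ(M), 1 − Φ(M)`, the state-1 estimand shifts weight away from the flatter slope.
Explicitly, `θ_IV(1) − θ_IV(0) = m Φ(M)(1 − Φ(M)) δ c / (Φ(M) + (1 − Φ(M))(1 − c))`. -/

section StepFunction

variable {μ : Measure ℝ} {f : ℝ → ℝ}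

theorem integral_mul_ite_lt (hf : Integrable f μ) (M a b : ℝ) :
    ∫ z, f z * (if z < M then a else b) ∂μ
      = a * ∫ z in Iio M, f z ∂μ + b * ∫ z in Ici M, f z ∂μ := by
  have below : EqOn (fun z ↦ a * f z) (fun z ↦ f z * (if z < M then a else b)) (Iio M) :=
    fun z (hz : z < M) ↦ by simp only [if_pos hz, mul_comm]
  have above : EqOn (fun z ↦ b * f z) (fun z ↦ f z * (if z < M then a else b)) (Ici M) :=
    fun z (hz : M ≤ z) ↦ by simp only [if_neg (not_lt.mpr hz), mul_comm]
  rw [← intervalIntegral.integral_Iio_add_Ici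
      ((hf.const_mul a).integrableOn.congr_fun below measurableSet_Iio)
      ((hf.const_mul b).integrableOn.congr_fun above measurableSet_Ici),
    ← setIntegral_congr_fun measurableSet_Iio below,
    ← setIntegral_congr_fun measurableSet_Ici above, integral_const_mul, integral_const_mul]

end StepFunction

section StandardNormal

open ProbabilityTheory

theorem stdNormalPDF_eq_gaussianPDFReal : stdNormalPDF = gaussianPDFReal 0 1 := by
  ext z
  simp [stdNormalPDF, gaussianPDFReal]

theorem stdNormalPDF_pos (z : ℝ) : 0 < stdNormalPDF z := by
  rw [stdNormalPDF_eq_gaussianPDFReal]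
  exact gaussianPDFReal_pos 0 1 z one_ne_zero

theorem integrable_stdNormalPDF : Integrable stdNormalPDF := by
  rw [stdNormalPDF_eq_gaussianPDFReal]
  exact integrable_gaussianPDFReal 0 1

theorem integral_stdNormalPDF : ∫ z, stdNormalPDF z = 1 := by
  rw [stdNormalPDF_eq_gaussianPDFReal]
  exact integral_gaussianPDFReal_eq_one 0 one_ne_zero

theorem setIntegral_stdNormalPDF_pos {s : Set ℝ} (hs : volume s ≠ 0) :
    0 < ∫ z in s, stdNormalPDF z := by
  rw [setIntegral_pos_iff_support_of_nonneg_ae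
      (Filter.Eventually.of_forall fun z ↦ (stdNormalPDF_pos z).le)
      integrable_stdNormalPDF.integrableOn,
    eq_univ_of_forall fun z ↦ Function.mem_support.mpr (stdNormalPDF_pos z).ne', univ_inter]
  exact pos_iff_ne_zero.mpr hs

theorem setIntegral_Iio_stdNormalPDF (x : ℝ) : ∫ z in Iio x, stdNormalPDF z = stdNormalCDF x :=
  integral_Iic_eq_integral_Iio.symm

theorem setIntegral_Ici_stdNormalPDF (x : ℝ) :
    ∫ z in Ici x, stdNormalPDF z = 1 - stdNormalCDF x := by
  rw [← integral_stdNormalPDF, ← intervalIntegral.integral_Iio_add_Ici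
      integrable_stdNormalPDF.integrableOn integrable_stdNormalPDF.integrableOn,
    setIntegral_Iio_stdNormalPDF, add_sub_cancel_left]

theorem stdNormalCDF_pos (x : ℝ) : 0 < stdNormalCDF x :=
  setIntegral_stdNormalPDF_pos (by simp)

theorem stdNormalCDF_lt_one (x : ℝ) : stdNormalCDF x < 1 := by
  have h := setIntegral_stdNormalPDF_pos (s := Ici x) (by simp)
  rw [setIntegral_Ici_stdNormalPDF] at h
  linarith

theorem integral_stdNormalPDF_mul_ite_lt (M a b : ℝ) :
    ∫ z, stdNormalPDF z * (if z < M then a else b)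
      = a * stdNormalCDF M + b * (1 - stdNormalCDF M) := by
  rw [integral_mul_ite_lt integrable_stdNormalPDF, setIntegral_Iio_stdNormalPDF,
    setIntegral_Ici_stdNormalPDF]

end StandardNormal

section GovernmentSpending

variable {M m δ c : ℝ}

theorem Xstage_one_lt_iff (hc : c ≤ 1) (z : ℝ) : Xstage M c 1 z < M ↔ z < M := by
  by_cases hz : z < M
  · simp [Xstage, hz]
  · have : M ≤ z - (z - M) * c := by nlinarith
    simp [Xstage, hz, this]

theorem psiDeriv_Xstage_zero (z : ℝ) :
    psiDeriv M m δ (Xstage M c 0 z) = if z < M then m else m * (1 - δ) := rfl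

theorem psiDeriv_Xstage_one_mul_XstageDeriv (hc : c ≤ 1) (z : ℝ) :
    psiDeriv M m δ (Xstage M c 1 z) * XstageDeriv M c 1 z
      = if z < M then m else m * (1 - δ) * (1 - c) := by
  by_cases hz : z < M <;> simp [psiDeriv, Xstage_one_lt_iff hc, XstageDeriv, hz]

theorem XstageDeriv_one (z : ℝ) : XstageDeriv M c 1 z = if z < M then 1 else 1 - c := rfl

theorem ivEstimand_zero :
    ∫ z, stdNormalPDF z * psiDeriv M m δ (Xstage M c 0 z)
      = m * (stdNormalCDF M + (1 - stdNormalCDF M) * (1 - δ)) := by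
  simp only [psiDeriv_Xstage_zero, integral_stdNormalPDF_mul_ite_lt]
  ring

theorem ivEstimand_one_numerator (hc : c ≤ 1) :
    ∫ z, stdNormalPDF z * psiDeriv M m δ (Xstage M c 1 z) * XstageDeriv M c 1 z
      = m * (stdNormalCDF M + (1 - stdNormalCDF M) * (1 - δ) * (1 - c)) := by
  simp only [mul_assoc, psiDeriv_Xstage_one_mul_XstageDeriv hc,
    integral_stdNormalPDF_mul_ite_lt]
  ring

theorem ivEstimand_one_denominator :
    ∫ z, stdNormalPDF z * XstageDeriv M c 1 z = stdNormalCDF M + (1 - stdNormalCDF M) * (1 - c) := by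
  simp only [XstageDeriv_one, integral_stdNormalPDF_mul_ite_lt]
  ring

end GovernmentSpending

theorem weighted_slope_sub_eq {P m δ c : ℝ} (hD : P + (1 - P) * (1 - c) ≠ 0) :
    m * (P + (1 - P) * (1 - δ) * (1 - c)) / (P + (1 - P) * (1 - c)) - m * (P + (1 - P) * (1 - δ))
      = m * P * (1 - P) * δ * c / (P + (1 - P) * (1 - c)) := by
  field_simp
  ring

theorem spurious_state_dependence_general (M m δ c : ℝ)
    (hm : 0 < m) (hδ : δ ∈ Set.Ioo (0 : ℝ) 1)
    (hc : c ∈ Set.Ioo (0 : ℝ) 1) :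
    (∫ z : ℝ, stdNormalPDF z * psiDeriv M m δ (Xstage M c 0 z)
        = m * (stdNormalCDF M + (1 - stdNormalCDF M) * (1 - δ)))
    ∧ ((∫ z : ℝ, stdNormalPDF z * psiDeriv M m δ (Xstage M c 1 z) * XstageDeriv M c 1 z)
          / (∫ z : ℝ, stdNormalPDF z * XstageDeriv M c 1 z)
        = m * (stdNormalCDF M + (1 - stdNormalCDF M) * (1 - δ) * (1 - c))
            / (stdNormalCDF M + (1 - stdNormalCDF M) * (1 - c)))
    ∧ 0 < ((∫ z : ℝ, stdNormalPDF z * psiDeriv M m δ (Xstage M c 1 z) * XstageDeriv M c 1 z)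
            / (∫ z : ℝ, stdNormalPDF z * XstageDeriv M c 1 z))
          - ∫ z : ℝ, stdNormalPDF z * psiDeriv M m δ (Xstage M c 0 z) := by
  obtain ⟨hδ₀, -⟩ := hδ
  obtain ⟨hc₀, hc₁⟩ := hc
  rw [ivEstimand_zero, ivEstimand_one_numerator hc₁.le, ivEstimand_one_denominator]
  refine ⟨rfl, rfl, ?_⟩
  have hP₀ := stdNormalCDF_pos M
  have hP₁ := sub_pos.mpr (stdNormalCDF_lt_one M)
  have hD : 0 < stdNormalCDF M + (1 - stdNormalCDF M) * (1 - c) := by nlinarith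
  rw [weighted_slope_sub_eq hD.ne']
  positivity

/-- (Spurious state dependence in LP-IV.) With
`θ_IV(0) = ∫ φ(z) ψ'(X(z,0)) dz` and
`θ_IV(1) = ∫ φ(z) ψ'(X(z,1)) X'(z,1) dz / ∫ φ(z) X'(z,1) dz`, one has
`θ_IV(0) = m(Φ(M) + (1−Φ(M))(1−δ))`,
`θ_IV(1) = m(Φ(M) + (1−Φ(M))(1−δ)(1−c))/(Φ(M) + (1−Φ(M))(1−c))`, and the
interaction coefficient `β₁ = θ_IV(1) − θ_IV(0)` is strictly positive whenever
`δ > 0` and `c > 0` — even though the effect of interest is not state-dependent. -/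
theorem spurious_state_dependence (M m δ c : ℝ)
    (hM : 0 < M) (hm : 0 < m) (hδ : δ ∈ Set.Ioo (0 : ℝ) 1)
    (hc : c ∈ Set.Ioo (0 : ℝ) 1) :
    (∫ z : ℝ, stdNormalPDF z * psiDeriv M m δ (Xstage M c 0 z)
        = m * (stdNormalCDF M + (1 - stdNormalCDF M) * (1 - δ)))
    ∧ ((∫ z : ℝ, stdNormalPDF z * psiDeriv M m δ (Xstage M c 1 z) * XstageDeriv M c 1 z)
          / (∫ z : ℝ, stdNormalPDF z * XstageDeriv M c 1 z)
        = m * (stdNormalCDF M + (1 - stdNormalCDF M) * (1 - δ) * (1 - c))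
            / (stdNormalCDF M + (1 - stdNormalCDF M) * (1 - c)))
    ∧ 0 < ((∫ z : ℝ, stdNormalPDF z * psiDeriv M m δ (Xstage M c 1 z) * XstageDeriv M c 1 z)
            / (∫ z : ℝ, stdNormalPDF z * XstageDeriv M c 1 z))
          - ∫ z : ℝ, stdNormalPDF z * psiDeriv M m δ (Xstage M c 0 z) :=
  spurious_state_dependence_general M m δ c hm hδ hc
end
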